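/- arXiv:1812.02687 — 2 statements merged into one kernel-verified Lean document; each statement's English description precedes it below -/
import Mathlib

section
/- (Lemma 2) Let n ≥ 1 be an integer and η ∈ ℝ, and let E be a region of strong effect determined by data s, μ_1 > ... > μ_s > 0 and 0 < p_1 < ... < p_{s+1} = 1. Then the maximum over E of the type II error probability β is attained at a corner: for every (μ,p) ∈ E, β(n,η,μ,p) ≤ max_{i=1,...,s} β(n,η,μ_i,p_i), and each corner (μ_i,p_i) belongs to E. -/
open MeasureTheory Real

/-- Standard normal density. -/
noncomputable def stdphi (t : ℝ) : ℝ := (Real.sqrt (2 * Real.pi))⁻¹ * Real.exp (-t ^ 2 / 2)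

/-- Standard normal CDF. -/
noncomputable def stdPhi (x : ℝ) : ℝ := ∫ t in Set.Iic x, stdphi t

/-- The type II error function β(n,η,μ,p). -/
noncomputable def betaFn (n : ℕ) (η μ p : ℝ) : ℝ :=
  ∑ k ∈ Finset.range (n + 1), (n.choose k : ℝ) * p ^ k * (1 - p) ^ (n - k) *
    stdPhi (Real.sqrt ((n : ℝ) / 2) * (η - (k : ℝ) * μ / n))

/-! On each strip `p_i ≤ p ≤ p_{i+1}`, `μ ≥ μ_i` of `E`, `β` decreases in `μ` (the Bernstein
weights `C(n,k) p^k (1-p)^(n-k)` are nonnegative and `Φ` is monotone) and decreases in `p`: for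
`μ ≥ 0` the values `Φ(√(n/2)(η - kμ/n))` decrease in `k`, and the derivative of a Bernstein
polynomial `∑ f_k B_{n+1,k}` is `(n+1) ∑ (f_{k+1} - f_k) B_{n,k}`. So the maximum over the strip
is at its corner `(μ_i, p_i)`. -/

open Polynomial Finset

namespace bernsteinPolynomial

theorem derivative_sum_smul {R : Type*} [CommRing R] (n : ℕ) (f : ℕ → R) :
    derivative (∑ k ∈ range (n + 2), f k • bernsteinPolynomial R (n + 1) k) =
      (n + 1 : R[X]) * ∑ k ∈ range (n + 1), (f (k + 1) - f k) • bernsteinPolynomial R n k := by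
  have hsucc (k : ℕ) : derivative (f (k + 1) • bernsteinPolynomial R (n + 1) (k + 1)) =
      (n + 1 : R[X]) * (f (k + 1) • bernsteinPolynomial R n k -
        f (k + 1) • bernsteinPolynomial R n (k + 1)) := by
    rw [map_smul, derivative_succ_aux, ← mul_smul_comm, smul_sub]
  have hzero : derivative (f 0 • bernsteinPolynomial R (n + 1) 0) =
      -(n + 1 : R[X]) * (f 0 • bernsteinPolynomial R n 0) := by
    rw [map_smul, derivative_zero, ← mul_smul_comm]
    push_cast
    ring
  have hshift : ∑ k ∈ range (n + 1), f (k + 1) • bernsteinPolynomial R n (k + 1) +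
      f 0 • bernsteinPolynomial R n 0 = ∑ k ∈ range (n + 1), f k • bernsteinPolynomial R n k := by
    rw [← sum_range_succ' (fun k => f k • bernsteinPolynomial R n k), sum_range_succ,
      eq_zero_of_lt R n.lt_add_one, smul_zero, add_zero]
  rw [sum_range_succ', map_add, map_sum, sum_congr rfl fun k _ => hsucc k, hzero, ← mul_sum,
    sum_sub_distrib]
  simp only [sub_smul, sum_sub_distrib]
  linear_combination -(n + 1 : R[X]) * hshift

lemma eval_nonneg {n k : ℕ} {x : ℝ} (hx : x ∈ Set.Icc 0 1) :
    0 ≤ (bernsteinPolynomial ℝ n k).eval x := by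
  have hx₀ : 0 ≤ x := hx.1
  have hx₁ : 0 ≤ 1 - x := sub_nonneg.2 hx.2
  simp only [bernsteinPolynomial, eval_mul, eval_pow, eval_sub, eval_one, eval_X, eval_natCast]
  positivity

theorem antitoneOn_eval_sum_smul {f : ℕ → ℝ} (hf : Antitone f) (n : ℕ) :
    AntitoneOn (fun x => (∑ k ∈ range (n + 1), f k • bernsteinPolynomial ℝ n k).eval x)
      (Set.Icc 0 1) := by
  cases n with
  | zero => exact fun x _ y _ _ => by simp [bernsteinPolynomial]
  | succ m =>
    set P := ∑ k ∈ range (m + 2), f k • bernsteinPolynomial ℝ (m + 1) k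
    refine antitoneOn_of_deriv_nonpos (convex_Icc 0 1) P.continuous.continuousOn
      P.differentiable.differentiableOn fun x hx => ?_
    rw [Polynomial.deriv, derivative_sum_smul, eval_mul, eval_finsetSum]
    refine mul_nonpos_of_nonneg_of_nonpos
      (by simp only [eval_add, eval_natCast, eval_one]; positivity) (sum_nonpos fun k _ => ?_)
    rw [eval_smul, smul_eq_mul]
    exact mul_nonpos_of_nonpos_of_nonneg (sub_nonpos.2 (hf k.le_succ))
      (eval_nonneg (interior_subset hx))

end bernsteinPolynomial

lemma stdphi_eq_gaussianPDFReal : stdphi = ProbabilityTheory.gaussianPDFReal 0 1 := by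
  ext t
  simp [stdphi, ProbabilityTheory.gaussianPDFReal]

lemma monotone_stdPhi : Monotone stdPhi := fun x y hxy => by
  unfold stdPhi
  rw [stdphi_eq_gaussianPDFReal]
  exact setIntegral_mono_set (ProbabilityTheory.integrable_gaussianPDFReal 0 1).integrableOn
    (.of_forall fun t => ProbabilityTheory.gaussianPDFReal_nonneg 0 1 t)
    (Set.Iic_subset_Iic.mpr hxy).eventuallyLE

lemma betaFn_eq_eval_sum_smul_bernsteinPolynomial (n : ℕ) (η μ p : ℝ) :
    betaFn n η μ p = (∑ k ∈ range (n + 1),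
      stdPhi (√((n : ℝ) / 2) * (η - k * μ / n)) • bernsteinPolynomial ℝ n k).eval p := by
  simp only [betaFn, eval_finsetSum, eval_smul, bernsteinPolynomial, eval_mul, eval_pow, eval_sub,
    eval_one, eval_X, eval_natCast, smul_eq_mul]
  exact sum_congr rfl fun k _ => mul_comm _ _

lemma antitone_betaFn_mu (n : ℕ) (η : ℝ) {p : ℝ} (hp : p ∈ Set.Icc 0 1) :
    Antitone fun μ => betaFn n η μ p := fun μ μ' hμ => by
  have hp₀ : 0 ≤ p := hp.1
  have hp₁ : 0 ≤ 1 - p := sub_nonneg.2 hp.2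
  refine sum_le_sum fun k _ => mul_le_mul_of_nonneg_left (monotone_stdPhi ?_) (by positivity)
  gcongr

lemma antitoneOn_betaFn_p (n : ℕ) (η : ℝ) {μ : ℝ} (hμ : 0 ≤ μ) :
    AntitoneOn (betaFn n η μ) (Set.Icc 0 1) := by
  have hf : Antitone fun k : ℕ => stdPhi (√((n : ℝ) / 2) * (η - k * μ / n)) :=
    fun k l hkl => monotone_stdPhi (by gcongr)
  simpa only [← betaFn_eq_eval_sum_smul_bernsteinPolynomial] using
    bernsteinPolynomial.antitoneOn_eval_sum_smul hf n

theorem betaFn_max_on_strong_effect_general (n : ℕ) (η : ℝ)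
    (s : ℕ) (μs : Fin s → ℝ) (ps : Fin (s + 1) → ℝ)
    (hμpos : ∀ i, 0 < μs i)
    (hpmono : StrictMono ps) (hp0 : 0 < ps 0) (hplast : ps (Fin.last s) = 1)
    (E : Set (ℝ × ℝ))
    (hE : E = {q : ℝ × ℝ | ∃ i : Fin s,
      ps i.castSucc ≤ q.2 ∧ q.2 ≤ ps i.succ ∧ μs i ≤ q.1}) :
    (∀ q ∈ E, ∃ i : Fin s, betaFn n η q.1 q.2 ≤ betaFn n η (μs i) (ps i.castSucc)) ∧
    (∀ i : Fin s, (μs i, ps i.castSucc) ∈ E) := by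
  subst hE
  have hps_mem (j : Fin (s + 1)) : ps j ∈ Set.Icc 0 1 :=
    ⟨hp0.le.trans (hpmono.monotone (Fin.zero_le j)), hplast ▸ hpmono.monotone (Fin.le_last j)⟩
  refine ⟨?_, fun i => ⟨i, le_rfl, (hpmono i.castSucc_lt_succ).le, le_rfl⟩⟩
  rintro ⟨μ, p⟩ ⟨i, hp_lo, hp_hi, hμ⟩
  have hp : p ∈ Set.Icc 0 1 := ⟨(hps_mem _).1.trans hp_lo, hp_hi.trans (hps_mem _).2⟩
  exact ⟨i, (antitone_betaFn_mu n η hp hμ).trans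
    (antitoneOn_betaFn_p n η (hμpos i).le (hps_mem _) hp hp_lo)⟩

/-- (Lemma 2) On a region of strong effect, the type II error probability `β` is
maximized at one of the corners `(μ_i, p_i)`, and each corner belongs to the region. -/
theorem betaFn_max_on_strong_effect (n : ℕ) (hn : 1 ≤ n) (η : ℝ)
    (s : ℕ) (hs : 1 ≤ s) (μs : Fin s → ℝ) (ps : Fin (s + 1) → ℝ)
    (hμanti : StrictAnti μs) (hμpos : ∀ i, 0 < μs i)
    (hpmono : StrictMono ps) (hp0 : 0 < ps 0) (hplast : ps (Fin.last s) = 1)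
    (E : Set (ℝ × ℝ))
    (hE : E = {q : ℝ × ℝ | ∃ i : Fin s,
      ps i.castSucc ≤ q.2 ∧ q.2 ≤ ps i.succ ∧ μs i ≤ q.1}) :
    (∀ q ∈ E, ∃ i : Fin s, betaFn n η q.1 q.2 ≤ betaFn n η (μs i) (ps i.castSucc)) ∧
    (∀ i : Fin s, (μs i, ps i.castSucc) ∈ E) :=
  betaFn_max_on_strong_effect_general n η s μs ps hμpos hpmono hp0 hplast E hE
end

section
/- Let n₁, n₂ ≥ 1 be integers and η₀ < η₁ be reals, and set α₀ = Φ(η₀·√(n₁/2)) and α₁ = 1 − Φ(η₁·√(n₁/2)). Define F(η₂) = α₁ + ∫_{η₀}^{η₁} √(n₁/2)·φ(x·√(n₁/2))·(1 − Φ( (((n₁+n₂)/n₂)·η₂ − (n₁/n₂)·x)·√(n₂/2) )) dx. Then F is continuous and strictly decreasing on ℝ, with F(η₂) → 1 − α₀ as η₂ → −∞ and F(η₂) → α₁ as η₂ → +∞; consequently, for every α with α₁ < α < 1 − α₀ there exists a unique η₂ ∈ ℝ such that F(η₂) = α. -/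
open MeasureTheory Real Filter

set_option maxHeartbeats 1000000

lemma stdphi_pos (t : ℝ) : 0 < stdphi t := by
  unfold stdphi
  positivity

lemma continuous_stdphi : Continuous stdphi := by
  unfold stdphi; fun_prop

lemma integrable_stdphi : Integrable stdphi := by
  have h : Integrable (fun x : ℝ => (Real.sqrt (2 * Real.pi))⁻¹ * Real.exp (-(1/2:ℝ) * x ^ 2)) :=
    (integrable_exp_neg_mul_sq (by norm_num : (0:ℝ) < 1/2)).const_mul _
  refine h.congr (Filter.Eventually.of_forall fun t => ?_)
  show (Real.sqrt (2 * Real.pi))⁻¹ * Real.exp (-(1/2:ℝ) * t ^ 2) = stdphi t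
  rw [show (-(1/2:ℝ)) * t ^ 2 = -t ^ 2 / 2 by ring]
  rfl

lemma integral_stdphi : ∫ t, stdphi t = 1 := by
  have h : ∫ x : ℝ, Real.exp (-(1/2:ℝ) * x ^ 2) = Real.sqrt (Real.pi / (1/2)) :=
    integral_gaussian (1/2)
  have h2 : ∫ t, stdphi t = (Real.sqrt (2*Real.pi))⁻¹ * ∫ x : ℝ, Real.exp (-(1/2:ℝ) * x ^ 2) := by
    rw [← integral_const_mul]
    congr 1 with t
    rw [show (-(1/2:ℝ)) * t ^ 2 = -t ^ 2 / 2 by ring]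
    rfl
  rw [h2, h, show Real.pi / (1/2) = 2 * Real.pi by ring]
  exact inv_mul_cancel₀ (Real.sqrt_ne_zero'.mpr (by positivity))

lemma stdPhi_sub (a b : ℝ) : stdPhi b - stdPhi a = ∫ t in a..b, stdphi t := by
  unfold stdPhi
  exact intervalIntegral.integral_Iic_sub_Iic integrable_stdphi.integrableOn integrable_stdphi.integrableOn

lemma stdPhi_strictMono : StrictMono stdPhi := by
  intro a b hab
  have h : 0 < ∫ t in a..b, stdphi t :=
    intervalIntegral.intervalIntegral_pos_of_pos (continuous_stdphi.intervalIntegrable a b)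
      (fun x => stdphi_pos x) hab
  have := stdPhi_sub a b
  linarith

lemma stdPhi_tendsto_atTop : Tendsto stdPhi atTop (nhds 1) := by
  have h1 : Tendsto (fun x => ∫ t in (0:ℝ)..x, stdphi t) atTop
      (nhds (∫ t in Set.Ioi 0, stdphi t)) :=
    intervalIntegral_tendsto_integral_Ioi 0 integrable_stdphi.integrableOn tendsto_id
  have h3 : stdPhi 0 + ∫ t in Set.Ioi 0, stdphi t = 1 := by
    rw [← integral_stdphi]
    exact intervalIntegral.integral_Iic_add_Ioi integrable_stdphi.integrableOn integrable_stdphi.integrableOn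
  have h4 : Tendsto (fun x => stdPhi 0 + ∫ t in (0:ℝ)..x, stdphi t) atTop (nhds 1) := by
    rw [← h3]
    exact tendsto_const_nhds.add h1
  refine h4.congr fun x => ?_
  have := stdPhi_sub 0 x
  linarith

lemma stdPhi_tendsto_atBot : Tendsto stdPhi atBot (nhds 0) := by
  have h1 : Tendsto (fun x => ∫ t in x..(0:ℝ), stdphi t) atBot (nhds (stdPhi 0)) :=
    intervalIntegral_tendsto_integral_Iic 0 integrable_stdphi.integrableOn tendsto_id
  have h4 : Tendsto (fun x => stdPhi 0 - ∫ t in x..(0:ℝ), stdphi t) atBot (nhds 0) := by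
    have := h1.const_sub (stdPhi 0)
    simpa using this
  refine h4.congr fun x => ?_
  have := stdPhi_sub x 0
  linarith

lemma stdPhi_lt_one (x : ℝ) : stdPhi x < 1 :=
  lt_of_lt_of_le (stdPhi_strictMono (lt_add_one x))
    (stdPhi_strictMono.monotone.ge_of_tendsto stdPhi_tendsto_atTop _)

lemma stdPhi_pos (x : ℝ) : 0 < stdPhi x :=
  lt_of_le_of_lt (stdPhi_strictMono.monotone.le_of_tendsto stdPhi_tendsto_atBot _)
    (stdPhi_strictMono (sub_one_lt x))

lemma continuous_stdPhi : Continuous stdPhi := by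
  have h : Continuous fun x => stdPhi 0 + ∫ t in (0:ℝ)..x, stdphi t :=
    continuous_const.add (integrable_stdphi.continuous_primitive 0)
  refine h.congr fun x => ?_
  have := stdPhi_sub 0 x
  linarith

/-- The function `η₂ ↦ F(η₂)` determining the second-stage threshold is continuous and
strictly decreasing, with limits `1 − α₀` at `−∞` and `α₁` at `+∞`; hence for every
`α ∈ (α₁, 1 − α₀)` there is a unique `η₂` with `F(η₂) = α`. -/
theorem second_stage_threshold_exists_unique (n₁ n₂ : ℕ) (hn₁ : 1 ≤ n₁) (hn₂ : 1 ≤ n₂)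
    (η₀ η₁ : ℝ) (hη : η₀ < η₁) (α₀ α₁ : ℝ)
    (hα₀ : α₀ = stdPhi (η₀ * Real.sqrt ((n₁ : ℝ) / 2)))
    (hα₁ : α₁ = 1 - stdPhi (η₁ * Real.sqrt ((n₁ : ℝ) / 2)))
    (F : ℝ → ℝ)
    (hF : ∀ η₂, F η₂ = α₁ + ∫ x in η₀..η₁,
      Real.sqrt ((n₁ : ℝ) / 2) * stdphi (x * Real.sqrt ((n₁ : ℝ) / 2)) *
        (1 - stdPhi ((((n₁ : ℝ) + n₂) / n₂ * η₂ - (n₁ : ℝ) / n₂ * x) *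
          Real.sqrt ((n₂ : ℝ) / 2)))) :
    Continuous F ∧ StrictAnti F ∧
    Tendsto F atBot (nhds (1 - α₀)) ∧ Tendsto F atTop (nhds α₁) ∧
    ∀ α : ℝ, α₁ < α → α < 1 - α₀ → ∃! η₂ : ℝ, F η₂ = α := by
  have hn₁pos : (0:ℝ) < (n₁:ℝ) := by exact_mod_cast hn₁
  have hn₂pos : (0:ℝ) < (n₂:ℝ) := by exact_mod_cast hn₂
  set c : ℝ := Real.sqrt ((n₁ : ℝ) / 2) with hcdef
  set d : ℝ := Real.sqrt ((n₂ : ℝ) / 2) with hddef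
  set A : ℝ := ((n₁ : ℝ) + n₂) / n₂ with hAdef
  set B : ℝ := (n₁ : ℝ) / n₂ with hBdef
  have hc : 0 < c := Real.sqrt_pos.mpr (by positivity)
  have hd : 0 < d := Real.sqrt_pos.mpr (by positivity)
  have hA : 0 < A := by positivity
  set G : ℝ → ℝ → ℝ := fun η x => c * stdphi (x * c) * (1 - stdPhi ((A * η - B * x) * d))
    with hGdef
  have hFG : ∀ η, F η = α₁ + ∫ x in η₀..η₁, G η x := fun η => hF η
  -- continuity of each slice
  have hGc : Continuous (Function.uncurry G) := by
    apply Continuous.mul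
    · exact continuous_const.mul (continuous_stdphi.comp (continuous_snd.mul continuous_const))
    · exact continuous_const.sub (continuous_stdPhi.comp
        (((continuous_const.mul continuous_fst).sub
          (continuous_const.mul continuous_snd)).mul continuous_const))
  have hGcx : ∀ η, Continuous (G η) := by
    intro η
    rw [hGdef]
    exact (continuous_const.mul (continuous_stdphi.comp (continuous_id.mul continuous_const))).mul
      (continuous_const.sub (continuous_stdPhi.comp
        (((continuous_const.sub (continuous_const.mul continuous_id)).mul continuous_const))))
  have hGint : ∀ η, IntervalIntegrable (G η) volume η₀ η₁ := fun η =>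
    (hGcx η).intervalIntegrable η₀ η₁
  -- continuity of F
  have hFcont : Continuous F := by
    have h := intervalIntegral.continuous_parametric_intervalIntegral_of_continuous'
      (μ := volume) hGc η₀ η₁
    have : F = fun η => α₁ + ∫ x in η₀..η₁, G η x := funext hFG
    rw [this]
    exact continuous_const.add h
  -- strict antitonicity
  have hanti : StrictAnti F := by
    intro a b hab
    rw [hFG a, hFG b]
    have key : 0 < ∫ x in η₀..η₁, (G a x - G b x) := by
      apply intervalIntegral.intervalIntegral_pos_of_pos ((hGint a).sub (hGint b)) _ hη
      intro x
      have h1 : stdPhi ((A * a - B * x) * d) < stdPhi ((A * b - B * x) * d) := by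
        apply stdPhi_strictMono
        have : A * a < A * b := by nlinarith
        nlinarith
      have h2 := stdphi_pos (x * c)
      simp only [hGdef]
      nlinarith [mul_pos (mul_pos hc h2) (sub_pos.mpr h1)]
    rw [intervalIntegral.integral_sub (hGint a) (hGint b)] at key
    linarith
  -- uniform bound
  have hbdd : ∀ η x, ‖G η x‖ ≤ c * stdphi (x * c) := by
    intro η x
    have h0 := stdPhi_pos ((A * η - B * x) * d)
    have h1 := stdPhi_lt_one ((A * η - B * x) * d)
    have h2 := stdphi_pos (x * c)
    have h3 : 0 < c * stdphi (x * c) := mul_pos hc h2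
    rw [Real.norm_eq_abs, abs_of_nonneg (by simp only [hGdef]; nlinarith [mul_pos h3 (sub_pos.mpr h1)])]
    simp only [hGdef]
    nlinarith [mul_pos h3 h0]
  have hbint : IntervalIntegrable (fun x => c * stdphi (x * c)) volume η₀ η₁ :=
    (continuous_const.mul (continuous_stdphi.comp (continuous_id.mul continuous_const))).intervalIntegrable η₀ η₁
  -- limit at +∞
  have hargTop : ∀ x : ℝ, Tendsto (fun η => (A * η - B * x) * d) atTop atTop := by
    intro x
    apply Tendsto.atTop_mul_const hd
    have h1 : Tendsto (fun η : ℝ => A * η) atTop atTop :=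
      Tendsto.const_mul_atTop hA tendsto_id
    simpa [sub_eq_add_neg] using tendsto_atTop_add_const_right atTop (-(B * x)) h1
  have hargBot : ∀ x : ℝ, Tendsto (fun η => (A * η - B * x) * d) atBot atBot := by
    intro x
    apply Tendsto.atBot_mul_const hd
    have h1 : Tendsto (fun η : ℝ => A * η) atBot atBot :=
      Tendsto.const_mul_atBot hA tendsto_id
    simpa [sub_eq_add_neg] using tendsto_atBot_add_const_right atBot (-(B * x)) h1
  have htop : Tendsto F atTop (nhds α₁) := by
    have h := intervalIntegral.tendsto_integral_filter_of_dominated_convergence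
      (μ := volume) (a := η₀) (b := η₁) (F := G) (f := fun _ => (0:ℝ))
      (fun x => c * stdphi (x * c))
      (Eventually.of_forall fun η => ((hGcx η).aestronglyMeasurable).restrict)
      (Eventually.of_forall fun η => ae_of_all _ fun x _ => hbdd η x)
      hbint
      (ae_of_all _ fun x _ => by
        have : Tendsto (fun η => G η x) atTop (nhds (c * stdphi (x * c) * (1 - 1))) :=
          tendsto_const_nhds.mul
            (tendsto_const_nhds.sub (stdPhi_tendsto_atTop.comp (hargTop x)))
        simpa using this)
    have h2 : Tendsto (fun η => α₁ + ∫ x in η₀..η₁, G η x) atTop (nhds (α₁ + 0)) := by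
      refine tendsto_const_nhds.add ?_
      simpa using h
    rw [add_zero] at h2
    exact h2.congr fun η => (hFG η).symm
  -- limit at -∞
  have hsubint : ∫ x in η₀..η₁, c * stdphi (x * c) = stdPhi (η₁ * c) - stdPhi (η₀ * c) := by
    rw [intervalIntegral.integral_const_mul,
      intervalIntegral.integral_comp_mul_right stdphi hc.ne', ← stdPhi_sub,
      smul_eq_mul, mul_inv_cancel_left₀ hc.ne']
  have hbot : Tendsto F atBot (nhds (1 - α₀)) := by
    have h := intervalIntegral.tendsto_integral_filter_of_dominated_convergence
      (μ := volume) (a := η₀) (b := η₁) (F := G) (f := fun x => c * stdphi (x * c))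
      (fun x => c * stdphi (x * c))
      (Eventually.of_forall fun η => ((hGcx η).aestronglyMeasurable).restrict)
      (Eventually.of_forall fun η => ae_of_all _ fun x _ => hbdd η x)
      hbint
      (ae_of_all _ fun x _ => by
        have : Tendsto (fun η => G η x) atBot (nhds (c * stdphi (x * c) * (1 - 0))) :=
          tendsto_const_nhds.mul
            (tendsto_const_nhds.sub (stdPhi_tendsto_atBot.comp (hargBot x)))
        simpa using this)
    have h2 : Tendsto (fun η => α₁ + ∫ x in η₀..η₁, G η x) atBot
        (nhds (α₁ + (stdPhi (η₁ * c) - stdPhi (η₀ * c)))) := by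
      refine tendsto_const_nhds.add ?_
      rwa [hsubint] at h
    have h3 : α₁ + (stdPhi (η₁ * c) - stdPhi (η₀ * c)) = 1 - α₀ := by
      rw [hα₀, hα₁]; ring
    rw [h3] at h2
    exact h2.congr fun η => (hFG η).symm
  refine ⟨hFcont, hanti, hbot, htop, ?_⟩
  intro α hα1 hα2
  obtain ⟨a, ha⟩ := (hbot.eventually (eventually_gt_nhds hα2)).exists
  obtain ⟨b, hb⟩ := (htop.eventually (eventually_lt_nhds hα1)).exists
  have hmem : α ∈ Set.uIcc (F a) (F b) := Set.mem_uIcc.mpr (Or.inr ⟨hb.le, ha.le⟩)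
  obtain ⟨x, -, hx⟩ := intermediate_value_uIcc hFcont.continuousOn hmem
  exact ⟨x, hx, fun y hy => hanti.injective (hy.trans hx.symm)⟩
end
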